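/- Let (V, μ, α) be a multiplicative Hom-Jordan algebra over a field F. If D₁ lies in the α^k-quasicentroid QC_{α^k}(V) and D₂ lies in the α^s-quasicentroid QC_{α^s}(V) (k, s ≥ 0), then the commutator [D₁, D₂] = D₁ ∘ D₂ − D₂ ∘ D₁ satisfies μ([D₁,D₂](x), α^(k+s)(y)) + μ(α^(k+s)(x), [D₁,D₂](y)) = 0 for all x, y ∈ V; in particular [D₁, D₂] is an α^(k+s)-quasiderivation of V (with associated map D' = 0). -/
import Mathlib


/-- `D` is an `α^k`-quasiderivation of the Hom-Jordan algebra `(V, μ, α)`. -/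
def IsQDer {F V : Type*} [Field F] [AddCommGroup V] [Module F V]
    (μ : V →ₗ[F] V →ₗ[F] V) (α : V →ₗ[F] V) (k : ℕ) (D : V →ₗ[F] V) : Prop :=
  D ∘ₗ α = α ∘ₗ D ∧ ∃ D' : V →ₗ[F] V,
    D' ∘ₗ α = α ∘ₗ D' ∧
    ∀ x y : V, μ (D x) ((α ^ k) y) + μ ((α ^ k) x) (D y) = D' (μ x y)

/-- `D` lies in the `α^k`-quasicentroid of the Hom-Jordan algebra `(V, μ, α)`. -/
def InQCentroid {F V : Type*} [Field F] [AddCommGroup V] [Module F V]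
    (μ : V →ₗ[F] V →ₗ[F] V) (α : V →ₗ[F] V) (k : ℕ) (D : V →ₗ[F] V) : Prop :=
  D ∘ₗ α = α ∘ₗ D ∧ ∀ x y : V, μ (D x) ((α ^ k) y) = μ ((α ^ k) x) (D y)

theorem stmt6 {F V : Type*} [Field F] [AddCommGroup V] [Module F V]
    (μ : V →ₗ[F] V →ₗ[F] V) (α : V →ₗ[F] V)
    (hcomm : ∀ x y : V, μ x y = μ y x)
    (hJ : ∀ x y : V, μ (α (α x)) (μ y (μ x x)) = μ (μ (α x) y) (α (μ x x)))
    (hmult : ∀ x y : V, α (μ x y) = μ (α x) (α y))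
    (k s : ℕ) (D₁ D₂ : V →ₗ[F] V)
    (h₁ : InQCentroid μ α k D₁) (h₂ : InQCentroid μ α s D₂) :
    (∀ x y : V,
      μ ((D₁ ∘ₗ D₂ - D₂ ∘ₗ D₁) x) ((α ^ (k + s)) y) +
        μ ((α ^ (k + s)) x) ((D₁ ∘ₗ D₂ - D₂ ∘ₗ D₁) y) = 0) ∧
    IsQDer μ α (k + s) (D₁ ∘ₗ D₂ - D₂ ∘ₗ D₁) := by
  obtain ⟨hc1, hq1⟩ := h₁
  obtain ⟨hc2, hq2⟩ := h₂
  have com1 : Commute D₁ α := hc1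
  have com2 : Commute D₂ α := hc2
  have c1 : ∀ (n : ℕ) (z : V), D₁ ((α ^ n) z) = (α ^ n) (D₁ z) := by
    intro n z
    have := congrFun (congrArg DFunLike.coe (com1.pow_right n)) z
    simpa using this
  have c2 : ∀ (n : ℕ) (z : V), D₂ ((α ^ n) z) = (α ^ n) (D₂ z) := by
    intro n z
    have := congrFun (congrArg DFunLike.coe (com2.pow_right n)) z
    simpa using this
  have hpow : ∀ z : V, (α ^ (k + s)) z = (α ^ k) ((α ^ s) z) := by
    intro z
    rw [pow_add]
    rfl
  have key : ∀ x y : V,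
      μ (D₁ (D₂ x)) ((α ^ (k + s)) y) = μ ((α ^ (k + s)) x) (D₂ (D₁ y)) := by
    intro x y
    calc μ (D₁ (D₂ x)) ((α ^ (k + s)) y)
        = μ (D₁ (D₂ x)) ((α ^ k) ((α ^ s) y)) := by rw [hpow]
      _ = μ ((α ^ k) (D₂ x)) (D₁ ((α ^ s) y)) := hq1 _ _
      _ = μ (D₂ ((α ^ k) x)) ((α ^ s) (D₁ y)) := by rw [c2, c1]
      _ = μ ((α ^ s) ((α ^ k) x)) (D₂ (D₁ y)) := hq2 _ _
      _ = μ ((α ^ (k + s)) x) (D₂ (D₁ y)) := by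
            rw [show (α ^ (k+s)) x = (α ^ s) ((α ^ k) x) by
              rw [add_comm, pow_add]; rfl]
  have key2 : ∀ x y : V,
      μ ((α ^ (k + s)) x) (D₁ (D₂ y)) = μ (D₂ (D₁ x)) ((α ^ (k + s)) y) := by
    intro x y
    rw [hcomm, key y x, hcomm]
  have main : ∀ x y : V,
      μ ((D₁ ∘ₗ D₂ - D₂ ∘ₗ D₁) x) ((α ^ (k + s)) y) +
        μ ((α ^ (k + s)) x) ((D₁ ∘ₗ D₂ - D₂ ∘ₗ D₁) y) = 0 := by
    intro x y
    simp only [LinearMap.sub_apply, LinearMap.comp_apply, map_sub,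
      LinearMap.sub_apply]
    rw [key x y, key2 x y]
    abel
  refine ⟨main, ?_, 0, by simp, ?_⟩
  · ext z
    simp only [LinearMap.comp_apply, LinearMap.sub_apply, map_sub]
    have e1 := congrFun (congrArg DFunLike.coe hc1) (D₂ z)
    have e2 := congrFun (congrArg DFunLike.coe hc2) z
    have e3 := congrFun (congrArg DFunLike.coe hc2) (D₁ z)
    have e4 := congrFun (congrArg DFunLike.coe hc1) z
    simp only [LinearMap.comp_apply] at e1 e2 e3 e4
    rw [e2, e1, e4, e3]
  · intro x y
    rw [main x y]
    simp
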